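/- (Asymptotic single-bit probability, used in the proof of Theorem 2) Let Ω be an LT output degree distribution and let λ ∈ (0,1). For every h ≥ d_max let l_h be an integer with 1 ≤ l_h ≤ h and l_h/h → λ as h → ∞. Then p_{l_h} → ρ_λ as h → ∞, where p_l is computed with parameter h. -/

import Mathlib

open Finset Filter

/-- `ρ_λ = (1/2)·Σ_{j=1}^{dmax} Ω_j·(1 − (1 − 2λ)^j)`. -/
noncomputable def rho (dmax : ℕ) (Ω : ℕ → ℝ) (lam : ℝ) : ℝ :=
  (1 / 2) * ∑ j ∈ Finset.Icc 1 dmax, Ω j * (1 - (1 - 2 * lam) ^ j)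

/-- `p_{j,l} = Σ_{i odd, max(1, l+j−h) ≤ i ≤ min(l,j)} C(j,i)·C(h−j, l−i)/C(h,l)`. -/
noncomputable def pjl (h j l : ℕ) : ℝ :=
  ∑ i ∈ (Finset.Icc (max 1 (l + j - h)) (min l j)).filter (fun i => Odd i),
    ((j.choose i : ℝ) * ((h - j).choose (l - i) : ℝ)) / (h.choose l : ℝ)

/-- `p_l = Σ_{j=1}^{dmax} Ω_j · p_{j,l}`. -/
noncomputable def pl (dmax : ℕ) (Ω : ℕ → ℝ) (h l : ℕ) : ℝ :=
  ∑ j ∈ Finset.Icc 1 dmax, Ω j * pjl h j l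

/-!
The ratio `C(h−j, l−i)/C(h,l)` equals `l^(i) (h−l)^(j−i) / h^(j)` in falling factorials, so for
fixed `j` the hypergeometric weights `C(j,i) C(h−j, l−i)/C(h,l)` tend to the binomial weights
`C(j,i) λ^i (1−λ)^(j−i)` when `l/h → λ`. Once `l` and `h − l` exceed `j`, `p_{j,l}` sums these over
all odd `i ≤ j`, and the odd part of the binomial distribution is
`((λ + (1−λ))^j − ((1−λ) − λ)^j)/2 = (1 − (1−2λ)^j)/2`.
-/

open scoped Nat Topology

theorem Nat.choose_sub_mul_descFactorial {h l i j : ℕ} (hij : i ≤ j) (hil : i ≤ l)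
    (hlj : l + j ≤ h + i) :
    (h - j).choose (l - i) * h.descFactorial j
      = h.choose l * l.descFactorial i * (h - l).descFactorial (j - i) := by
  have hsub : h - j - (l - i) = h - l - (j - i) := by omega
  have key : (h - j).choose (l - i) * (l - i)! * (h - l - (j - i))! = (h - j)! := by
    rw [← hsub]; exact Nat.choose_mul_factorial_mul_factorial (by omega)
  refine Nat.eq_of_mul_eq_mul_right
    (Nat.mul_pos (l - i).factorial_pos (h - l - (j - i)).factorial_pos) ?_
  calc (h - j).choose (l - i) * h.descFactorial j * ((l - i)! * (h - l - (j - i))!)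
      = (h - j)! * h.descFactorial j := by rw [← key]; ring
    _ = h ! := Nat.factorial_mul_descFactorial (by omega)
    _ = h.choose l * l ! * (h - l)! := (Nat.choose_mul_factorial_mul_factorial (by omega)).symm
    _ = h.choose l * ((l - i)! * l.descFactorial i) *
          ((h - l - (j - i))! * (h - l).descFactorial (j - i)) := by
      rw [Nat.factorial_mul_descFactorial hil, Nat.factorial_mul_descFactorial (by omega)]
    _ = _ := by ring

theorem Nat.cast_choose_sub_div_cast_choose {h l i j : ℕ} (hij : i ≤ j) (hil : i ≤ l)
    (hlj : l + j ≤ h + i) :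
    ((h - j).choose (l - i) : ℝ) / h.choose l
      = (l.descFactorial i / h ^ i) * ((h - l).descFactorial (j - i) / h ^ (j - i))
        / (h.descFactorial j / h ^ j) := by
  have hchoose : (h.choose l : ℝ) ≠ 0 := by exact_mod_cast (Nat.choose_pos (by omega)).ne'
  have hdesc : (h.descFactorial j : ℝ) ≠ 0 := by
    exact_mod_cast Nat.descFactorial_eq_zero_iff_lt.not.mpr (by omega)
  have hpow : (h : ℝ) ^ j = h ^ i * h ^ (j - i) := by rw [← pow_add, Nat.add_sub_cancel' hij]
  rcases Nat.eq_zero_or_pos h with rfl | hpos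
  · obtain rfl : j = 0 := by omega
    obtain rfl : i = 0 := by omega
    obtain rfl : l = 0 := by omega
    simp
  rw [hpow]
  field_simp
  exact_mod_cast Nat.choose_sub_mul_descFactorial hij hil hlj

section RatioLimit

variable {a : ℕ → ℕ} {c : ℝ}

theorem tendsto_atTop_of_tendsto_div_natCast (ha : Tendsto (fun h ↦ (a h : ℝ) / h) atTop (𝓝 c))
    (hc : 0 < c) : Tendsto a atTop atTop := by
  have hreal : Tendsto (fun h ↦ (a h : ℝ) / h * h) atTop atTop :=
    ha.pos_mul_atTop hc tendsto_natCast_atTop_atTop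
  refine tendsto_natCast_atTop_iff.mp (hreal.congr' ?_)
  filter_upwards [eventually_ne_atTop 0] with h hh
  field_simp

theorem tendsto_natSub_div_natCast (ha : Tendsto (fun h ↦ (a h : ℝ) / h) atTop (𝓝 c))
    (hc : c < 1) : Tendsto (fun h ↦ ((h - a h : ℕ) : ℝ) / h) atTop (𝓝 (1 - c)) := by
  have hlt : ∀ᶠ h in atTop, (a h : ℝ) / h < 1 := ha.eventually (gt_mem_nhds hc)
  refine (tendsto_const_nhds.sub ha).congr' ?_
  filter_upwards [hlt, eventually_ne_atTop 0] with h hlt hh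
  have hle : a h ≤ h := by
    rw [div_lt_one (by positivity)] at hlt
    exact_mod_cast hlt.le
  rw [Nat.cast_sub hle]
  field_simp

theorem tendsto_descFactorial_div_pow (ha : Tendsto (fun h ↦ (a h : ℝ) / h) atTop (𝓝 c))
    (k : ℕ) : Tendsto (fun h ↦ ((a h).descFactorial k : ℝ) / h ^ k) atTop (𝓝 (c ^ k)) := by
  have hfactor (m : ℕ) : Tendsto (fun h ↦ ((a h : ℝ) - m) / h) atTop (𝓝 c) := by
    simpa [sub_div] using ha.sub (tendsto_const_div_atTop_nhds_zero_nat (m : ℝ))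
  have hprod := tendsto_finsetProd (range k) fun m _ ↦ hfactor m
  rw [prod_const, card_range] at hprod
  refine hprod.congr fun h ↦ ?_
  rw [← descPochhammer_eval_eq_descFactorial, descPochhammer_eval_eq_prod_range,
    prod_div_distrib, prod_const, card_range]

end RatioLimit

theorem two_mul_sum_odd_choose_mul_pow {R : Type*} [CommRing R] (x y : R) (n : ℕ) :
    2 * ∑ i ∈ (range (n + 1)).filter Odd, x ^ i * y ^ (n - i) * n.choose i
      = (x + y) ^ n - (y - x) ^ n := by
  rw [show y - x = -x + y by ring, add_pow, add_pow, ← sum_sub_distrib, mul_sum, sum_filter]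
  refine sum_congr rfl fun i _ ↦ ?_
  rcases Nat.even_or_odd i with hi | hi
  · rw [if_neg (Nat.not_odd_iff_even.mpr hi), hi.neg_pow]; ring
  · rw [if_pos hi, hi.neg_pow]; ring

theorem pjl_eq_sum_range_of_le {h j l : ℕ} (hjl : j ≤ l) (hjh : j ≤ h - l) :
    pjl h j l = ∑ i ∈ (range (j + 1)).filter Odd,
      (j.choose i : ℝ) * ((h - j).choose (l - i) / h.choose l) := by
  have hrange : (Icc (max 1 (l + j - h)) (min l j)).filter Odd = (range (j + 1)).filter Odd := by
    ext i
    simp only [mem_filter, mem_Icc, mem_range, and_congr_left_iff]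
    intro hi
    have := hi.pos
    omega
  simp only [pjl, hrange, mul_div_assoc]

theorem tendsto_pjl {l : ℕ → ℕ} {lam : ℝ} (hlam : lam ∈ Set.Ioo 0 1)
    (hconv : Tendsto (fun h ↦ (l h : ℝ) / h) atTop (𝓝 lam)) (j : ℕ) :
    Tendsto (fun h ↦ pjl h j (l h)) atTop (𝓝 ((1 - (1 - 2 * lam) ^ j) / 2)) := by
  obtain ⟨hlam0, hlam1⟩ := hlam
  have hsub := tendsto_natSub_div_natCast hconv hlam1
  have hid : Tendsto (fun h : ℕ ↦ (h : ℝ) / h) atTop (𝓝 1) :=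
    tendsto_const_nhds.congr' <| by
      filter_upwards [eventually_ne_atTop 0] with h hh
      field_simp
  have hlarge : ∀ᶠ h in atTop, j ≤ l h ∧ j ≤ h - l h :=
    ((tendsto_atTop_of_tendsto_div_natCast hconv hlam0).eventually_ge_atTop j).and
      ((tendsto_atTop_of_tendsto_div_natCast hsub (by linarith)).eventually_ge_atTop j)
  have hlim := tendsto_finsetSum ((range (j + 1)).filter Odd) fun i _ ↦
    (((tendsto_descFactorial_div_pow hconv i).mul (tendsto_descFactorial_div_pow hsub (j - i))).div
      (tendsto_descFactorial_div_pow hid j) (by simp)).const_mul (j.choose i : ℝ)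
  have hval : ∑ i ∈ (range (j + 1)).filter Odd,
      (j.choose i : ℝ) * (lam ^ i * (1 - lam) ^ (j - i) / 1 ^ j) = (1 - (1 - 2 * lam) ^ j) / 2 := by
    have h2 := two_mul_sum_odd_choose_mul_pow lam (1 - lam) j
    rw [add_sub_cancel, one_pow, show 1 - lam - lam = 1 - 2 * lam by ring] at h2
    rw [← h2, mul_div_cancel_left₀ _ two_ne_zero]
    exact sum_congr rfl fun i _ ↦ by ring
  rw [← hval]
  refine hlim.congr' ?_
  filter_upwards [hlarge] with h ⟨hjl, hjh⟩
  rw [pjl_eq_sum_range_of_le hjl hjh]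
  refine sum_congr rfl fun i hi ↦ ?_
  obtain ⟨hi, hodd⟩ := mem_filter.mp hi
  have hij : i ≤ j := Nat.lt_succ_iff.mp (mem_range.mp hi)
  have := hodd.pos
  exact congrArg _ (Nat.cast_choose_sub_div_cast_choose hij (by omega) (by omega)).symm

theorem stmt_19_general (dmax : ℕ) (Ω : ℕ → ℝ)
    (lam : ℝ) (hlam : lam ∈ Set.Ioo (0 : ℝ) 1)
    (l : ℕ → ℕ)
    (hconv : Tendsto (fun h : ℕ => (l h : ℝ) / (h : ℝ)) atTop (nhds lam)) :
    Tendsto (fun h : ℕ => pl dmax Ω h (l h)) atTop (nhds (rho dmax Ω lam)) := by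
  have hrho : rho dmax Ω lam = ∑ j ∈ Icc 1 dmax, Ω j * ((1 - (1 - 2 * lam) ^ j) / 2) := by
    rw [rho, mul_sum]
    exact sum_congr rfl fun j _ ↦ by ring
  rw [hrho]
  exact tendsto_finsetSum _ fun j _ ↦ (tendsto_pjl hlam hconv j).const_mul (Ω j)

/-- Asymptotic single-bit probability (used in the proof of Theorem 2): if
`1 ≤ l_h ≤ h` (for `h ≥ dmax`) and `l_h/h → λ ∈ (0,1)` as `h → ∞`, then
`p_{l_h} → ρ_λ`. -/
theorem stmt_19 (dmax : ℕ) (Ω : ℕ → ℝ)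
    (hΩpos : ∀ j ∈ Finset.Icc 1 dmax, 0 ≤ Ω j)
    (hΩsum : ∑ j ∈ Finset.Icc 1 dmax, Ω j = 1)
    (lam : ℝ) (hlam : lam ∈ Set.Ioo (0 : ℝ) 1)
    (l : ℕ → ℕ) (hl : ∀ h : ℕ, dmax ≤ h → 1 ≤ l h ∧ l h ≤ h)
    (hconv : Tendsto (fun h : ℕ => (l h : ℝ) / (h : ℝ)) atTop (nhds lam)) :
    Tendsto (fun h : ℕ => pl dmax Ω h (l h)) atTop (nhds (rho dmax Ω lam)) :=
  stmt_19_general dmax Ω lam hlam l hconv
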